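/- Define the linear operators N_b := ½(b⁺∘b⁻ + b⁻∘b⁺) − (p/2)·id and N_f := ½(f⁺∘f⁻ − f⁻∘f⁺) + (p/2)·id on V. Then every basis vector is a simultaneous eigenvector: for all integers m ≥ 0, 0 ≤ n ≤ p, N_b φ_{m,n} = m φ_{m,n} and N_f φ_{m,n} = n φ_{m,n}; and for all integers m ≥ 1, 1 ≤ n ≤ p, N_b ψ_{m,n} = m ψ_{m,n} and N_f ψ_{m,n} = n ψ_{m,n}. -/

import Mathlib

open scoped BigOperators

/-- Indices of the basis vectors `φ_{m,n}`: pairs `(m,n)` of naturals with `n ≤ p`. -/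
abbrev PhiIdx (p : ℕ) := {mn : ℕ × ℕ // mn.2 ≤ p}

/-- Indices of the basis vectors `ψ_{m,n}`: pairs `(m,n)` of naturals with
`1 ≤ m` and `1 ≤ n ≤ p - 1`. -/
abbrev PsiIdx (p : ℕ) := {mn : ℕ × ℕ // 1 ≤ mn.1 ∧ 1 ≤ mn.2 ∧ mn.2 + 1 ≤ p}

/-- The index set of the basis of the Fock-like carrier space. -/
abbrev FockIdx (p : ℕ) := PhiIdx p ⊕ PsiIdx p

/-- The Fock-like carrier space: the free `ℂ`-vector space on the basis
`{φ_{m,n} : m ≥ 0, 0 ≤ n ≤ p} ∪ {ψ_{m,n} : m ≥ 1, 1 ≤ n ≤ p−1}`. -/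
abbrev FockV (p : ℕ) := FockIdx p →₀ ℂ

/-- The vector `φ_{m,n}`, extended by `0` outside the range `m ≥ 0`, `0 ≤ n ≤ p`. -/
noncomputable def phi (p : ℕ) (m n : ℤ) : FockV p :=
  if h : 0 ≤ m ∧ 0 ≤ n ∧ n ≤ (p : ℤ) then
    Finsupp.single (Sum.inl ⟨(m.toNat, n.toNat), by show n.toNat ≤ p; omega⟩) 1
  else 0

/-- The vector `ψ_{m,n}`, extended by the conventions `ψ_{m,0} = ψ_{0,n} = 0`,
`ψ_{m,p} = (1/p)·φ_{m,p}` (for `m ≥ 1`) and `ψ_{m,n} = 0` outside the range. -/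
noncomputable def psi (p : ℕ) (m n : ℤ) : FockV p :=
  if h : 1 ≤ m ∧ 1 ≤ n ∧ n ≤ (p : ℤ) - 1 then
    Finsupp.single (Sum.inr ⟨(m.toNat, n.toNat),
      ⟨by show 1 ≤ m.toNat; omega, by show 1 ≤ n.toNat; omega,
       by show n.toNat + 1 ≤ p; omega⟩⟩) 1
  else if 1 ≤ m ∧ n = (p : ℤ) then (1 / (p : ℂ)) • phi p m n
  else 0

/-- Image of the basis vector `φ_{m,n}` under `b⁺`. -/
noncomputable def bpPhi (p : ℕ) (m n : ℤ) : FockV p :=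
  ((-1 : ℂ) ^ n) • phi p (m + 1) n - (2 * (n : ℂ) * (-1 : ℂ) ^ n) • psi p (m + 1) n

/-- Image of the basis vector `ψ_{m,n}` under `b⁺`. -/
noncomputable def bpPsi (p : ℕ) (m n : ℤ) : FockV p :=
  (-(-1 : ℂ) ^ n) • psi p (m + 1) n

/-- Image of the basis vector `φ_{m,n}` under `b⁻`. -/
noncomputable def bmPhi (p : ℕ) (m n : ℤ) : FockV p :=
  if Even m then
    ((-1 : ℂ) ^ n * (m : ℂ)) • phi p (m - 1) n
      - (2 * (-1 : ℂ) ^ n * (n : ℂ) * (m : ℂ)) • psi p (m - 1) n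
  else
    (-(-1 : ℂ) ^ n * (2 * (n : ℂ) - (m : ℂ) - ((p : ℂ) - 1))) • phi p (m - 1) n
      - (2 * (-1 : ℂ) ^ n * (n : ℂ) * ((m : ℂ) - 1)) • psi p (m - 1) n

/-- Image of the basis vector `ψ_{m,n}` under `b⁻`. -/
noncomputable def bmPsi (p : ℕ) (m n : ℤ) : FockV p :=
  if Even m then
    (-(-1 : ℂ) ^ n) • phi p (m - 1) n
      + ((-1 : ℂ) ^ n * (2 * (n : ℂ) - (m : ℂ) - (p : ℂ))) • psi p (m - 1) n
  else
    (-(-1 : ℂ) ^ n) • phi p (m - 1) n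
      - ((-1 : ℂ) ^ n * ((m : ℂ) - 1)) • psi p (m - 1) n

/-- Image of the basis vector `φ_{m,n}` under `f⁺`. -/
noncomputable def fpPhi (p : ℕ) (m n : ℤ) : FockV p := phi p m (n + 1)

/-- Image of the basis vector `ψ_{m,n}` under `f⁺`. -/
noncomputable def fpPsi (p : ℕ) (m n : ℤ) : FockV p := psi p m (n + 1)

/-- Image of the basis vector `φ_{m,n}` under `f⁻`. -/
noncomputable def fmPhi (p : ℕ) (m n : ℤ) : FockV p :=
  ((n : ℂ) * ((p : ℂ) + 1 - (n : ℂ))) • phi p m (n - 1)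

/-- Image of the basis vector `ψ_{m,n}` under `f⁻`. -/
noncomputable def fmPsi (p : ℕ) (m n : ℤ) : FockV p :=
  phi p m (n - 1) + (((n : ℂ) - 1) * ((p : ℂ) - (n : ℂ))) • psi p m (n - 1)

/-- The linear operator on the Fock-like space determined by its values `F m n`
on the basis vectors `φ_{m,n}` and `G m n` on the basis vectors `ψ_{m,n}`. -/
noncomputable def mkOp (p : ℕ) (F G : ℤ → ℤ → FockV p) : Module.End ℂ (FockV p) :=
  Finsupp.lift (FockV p) ℂ (FockIdx p) fun x =>
    match x with
    | Sum.inl a => F (a.1.1 : ℤ) (a.1.2 : ℤ)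
    | Sum.inr a => G (a.1.1 : ℤ) (a.1.2 : ℤ)

/-- The operator `b⁺`. -/
noncomputable def opBp (p : ℕ) : Module.End ℂ (FockV p) := mkOp p (bpPhi p) (bpPsi p)

/-- The operator `b⁻`. -/
noncomputable def opBm (p : ℕ) : Module.End ℂ (FockV p) := mkOp p (bmPhi p) (bmPsi p)

/-- The operator `f⁺`. -/
noncomputable def opFp (p : ℕ) : Module.End ℂ (FockV p) := mkOp p (fpPhi p) (fpPsi p)

/-- The operator `f⁻`. -/
noncomputable def opFm (p : ℕ) : Module.End ℂ (FockV p) := mkOp p (fmPhi p) (fmPsi p)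

/-- `b^ξ` for a sign `ξ`: `b 1 = b⁺`, `b (-1) = b⁻`. -/
noncomputable def opB (p : ℕ) (ξ : ℤ) : Module.End ℂ (FockV p) :=
  if ξ = 1 then opBp p else opBm p

/-- `f^ξ` for a sign `ξ`: `f 1 = f⁺`, `f (-1) = f⁻`. -/
noncomputable def opF (p : ℕ) (ξ : ℤ) : Module.End ℂ (FockV p) :=
  if ξ = 1 then opFp p else opFm p

/-- The commutator `[X, Y] = X∘Y − Y∘X` of operators. -/
noncomputable def opComm {p : ℕ} (X Y : Module.End ℂ (FockV p)) : Module.End ℂ (FockV p) :=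
  X * Y - Y * X

/-- The anticommutator `{X, Y} = X∘Y + Y∘X` of operators. -/
noncomputable def opAComm {p : ℕ} (X Y : Module.End ℂ (FockV p)) : Module.End ℂ (FockV p) :=
  X * Y + Y * X

/-- A sign, i.e. `+1` or `-1`, regarded as an integer. -/
def IsSign (x : ℤ) : Prop := x = 1 ∨ x = -1

/-- The number operator `N_b := ½(b⁺∘b⁻ + b⁻∘b⁺) − (p/2)·id`. -/
noncomputable def opNb (p : ℕ) : Module.End ℂ (FockV p) :=
  (1 / 2 : ℂ) • (opBp p * opBm p + opBm p * opBp p) - ((p : ℂ) / 2) • 1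

/-- The number operator `N_f := ½(f⁺∘f⁻ − f⁻∘f⁺) + (p/2)·id`. -/
noncomputable def opNf (p : ℕ) : Module.End ℂ (FockV p) :=
  (1 / 2 : ℂ) • (opFp p * opFm p - opFm p * opFp p) + ((p : ℂ) / 2) • 1

/-! The defining formulas of `b^±` and `f^±` stay valid for all integer indices under the
conventions `φ = ψ = 0` out of range and `ψ_{m,p} = φ_{m,p} / p`, except at a few boundary
indices; wherever such an index shows up in a composite such as `b⁺ b⁻ φ_{m,n}`, it carries
a coefficient (`m`, `m - 1`, `n` or `n - 1`) that vanishes there. So every composite is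
computed by formal substitution, and each eigenvalue equation becomes a scalar identity in
which the signs `(-1)ⁿ` cancel in pairs. -/

lemma LinearMap.map_smul_of_ne_zero {R M N : Type*} [Semiring R] [AddCommMonoid M]
    [AddCommMonoid N] [Module R M] [Module R N] (f : M →ₗ[R] N) {c : R} {v : M} {w : N}
    (h : c ≠ 0 → f v = w) : f (c • v) = c • w := by
  rcases eq_or_ne c 0 with rfl | hc
  · simp
  · rw [map_smul, h hc]

section

variable {p : ℕ} {m n : ℤ}

lemma phi_eq_zero (h : ¬(0 ≤ m ∧ 0 ≤ n ∧ n ≤ (p : ℤ))) : phi p m n = 0 := dif_neg h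

lemma psi_eq_zero (hp : 1 ≤ p) (h : ¬(1 ≤ m ∧ 1 ≤ n ∧ n ≤ (p : ℤ))) :
    psi p m n = 0 := by
  rw [psi, dif_neg (by omega), if_neg (by omega)]

lemma psi_top (hm : 1 ≤ m) : psi p m p = (1 / (p : ℂ)) • phi p m p := by
  rw [psi, dif_neg (by omega), if_pos ⟨hm, rfl⟩]

lemma mkOp_phi (F G : ℤ → ℤ → FockV p) (hm : 0 ≤ m) (hn : 0 ≤ n)
    (hnp : n ≤ (p : ℤ)) :
    mkOp p F G (phi p m n) = F m n := by
  simp [phi, dif_pos (show 0 ≤ m ∧ 0 ≤ n ∧ n ≤ (p : ℤ) from ⟨hm, hn, hnp⟩), mkOp,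
    Int.toNat_of_nonneg hm, Int.toNat_of_nonneg hn]

lemma mkOp_psi (F G : ℤ → ℤ → FockV p)
    (hFG : ∀ m, 1 ≤ m → G m p = (1 / (p : ℂ)) • F m p)
    (hm : 1 ≤ m) (hn : 1 ≤ n) (hnp : n ≤ (p : ℤ)) : mkOp p F G (psi p m n) = G m n := by
  rcases hnp.lt_or_eq with hnp | rfl
  · have h : 1 ≤ m ∧ 1 ≤ n ∧ n ≤ (p : ℤ) - 1 := ⟨hm, hn, by omega⟩
    rw [psi, dif_pos h]
    simp [mkOp, Int.toNat_of_nonneg (show 0 ≤ m by omega),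
      Int.toNat_of_nonneg (show 0 ≤ n by omega)]
  · rw [psi_top hm, map_smul, mkOp_phi F G (by omega) (by omega) le_rfl, ← hFG m hm]

lemma bpPsi_top (hp : 1 ≤ p) (hm : 1 ≤ m) :
    bpPsi p m p = (1 / (p : ℂ)) • bpPhi p m p := by
  have hp0 : (p : ℂ) ≠ 0 := Nat.cast_ne_zero.2 (by omega)
  rw [bpPsi, bpPhi, psi_top (by omega)]
  match_scalars
  field_simp
  ring

lemma bmPsi_top (hp : 1 ≤ p) (hm : 1 ≤ m) :
    bmPsi p m p = (1 / (p : ℂ)) • bmPhi p m p := by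
  have hp0 : (p : ℂ) ≠ 0 := Nat.cast_ne_zero.2 (by omega)
  rcases Int.even_or_odd m with hev | hodd
  · have hm2 : 2 ≤ m := by obtain ⟨k, rfl⟩ := hev; omega
    rw [bmPsi, bmPhi, if_pos hev, if_pos hev, psi_top (by omega)]
    match_scalars
    field_simp
    ring
  · rw [bmPsi, bmPhi, if_neg (Int.not_even_iff_odd.2 hodd), if_neg (Int.not_even_iff_odd.2 hodd)]
    rcases hm.lt_or_eq with hm1 | rfl
    · rw [psi_top (by omega)]
      match_scalars
      field_simp
      ring
    · rw [psi_eq_zero hp (by omega)]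
      match_scalars
      field_simp
      ring

lemma fpPsi_top (hp : 1 ≤ p) : fpPsi p m p = (1 / (p : ℂ)) • fpPhi p m p := by
  rw [fpPsi, fpPhi, psi_eq_zero hp (by omega), phi_eq_zero (by omega), smul_zero]

lemma fmPsi_top (hp : 1 ≤ p) : fmPsi p m p = (1 / (p : ℂ)) • fmPhi p m p := by
  have hp0 : (p : ℂ) ≠ 0 := Nat.cast_ne_zero.2 (by omega)
  rw [fmPsi, fmPhi]
  push_cast
  rw [sub_self, mul_zero, zero_smul, add_zero, smul_smul]
  match_scalars
  field_simp
  ring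

lemma opBp_phi (hp : 1 ≤ p) (hm : m ≠ -1) : opBp p (phi p m n) = bpPhi p m n := by
  by_cases h : 0 ≤ m ∧ 0 ≤ n ∧ n ≤ (p : ℤ)
  · exact mkOp_phi _ _ h.1 h.2.1 h.2.2
  · rw [phi_eq_zero h, map_zero, bpPhi, phi_eq_zero (by omega), psi_eq_zero hp (by omega)]
    simp

lemma opBm_phi (hp : 1 ≤ p) : opBm p (phi p m n) = bmPhi p m n := by
  by_cases h : 0 ≤ m ∧ 0 ≤ n ∧ n ≤ (p : ℤ)
  · exact mkOp_phi _ _ h.1 h.2.1 h.2.2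
  · rw [phi_eq_zero h, map_zero, bmPhi, phi_eq_zero (by omega), psi_eq_zero hp (by omega)]
    simp

lemma opFp_phi (hn : n ≠ -1) : opFp p (phi p m n) = fpPhi p m n := by
  by_cases h : 0 ≤ m ∧ 0 ≤ n ∧ n ≤ (p : ℤ)
  · exact mkOp_phi _ _ h.1 h.2.1 h.2.2
  · rw [phi_eq_zero h, map_zero, fpPhi, phi_eq_zero (by omega)]

lemma opFm_phi : opFm p (phi p m n) = fmPhi p m n := by
  by_cases h : 0 ≤ m ∧ 0 ≤ n ∧ n ≤ (p : ℤ)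
  · exact mkOp_phi _ _ h.1 h.2.1 h.2.2
  · rw [phi_eq_zero h, map_zero, fmPhi]
    rcases eq_or_ne n (p + 1) with rfl | hn
    · simp
    · rw [phi_eq_zero (by omega), smul_zero]

lemma opBp_psi (hp : 1 ≤ p) (hm : m ≠ 0) : opBp p (psi p m n) = bpPsi p m n := by
  by_cases h : 1 ≤ m ∧ 1 ≤ n ∧ n ≤ (p : ℤ)
  · exact mkOp_psi _ _ (fun _ hm => bpPsi_top hp hm) h.1 h.2.1 h.2.2
  · rw [psi_eq_zero hp h, map_zero, bpPsi, psi_eq_zero hp (by omega), smul_zero]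

lemma opBm_psi (hp : 1 ≤ p) (hn : n ≠ 0) : opBm p (psi p m n) = bmPsi p m n := by
  by_cases h : 1 ≤ m ∧ 1 ≤ n ∧ n ≤ (p : ℤ)
  · exact mkOp_psi _ _ (fun _ hm => bmPsi_top hp hm) h.1 h.2.1 h.2.2
  · rw [psi_eq_zero hp h, map_zero, bmPsi, phi_eq_zero (by omega), psi_eq_zero hp (by omega)]
    simp

lemma opFp_psi (hp : 1 ≤ p) (hn : n ≠ 0) : opFp p (psi p m n) = fpPsi p m n := by
  by_cases h : 1 ≤ m ∧ 1 ≤ n ∧ n ≤ (p : ℤ)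
  · exact mkOp_psi _ _ (fun _ _ => fpPsi_top hp) h.1 h.2.1 h.2.2
  · rw [psi_eq_zero hp h, map_zero, fpPsi, psi_eq_zero hp (by omega)]

lemma opFm_psi (hp : 1 ≤ p) (hm : m ≠ 0) : opFm p (psi p m n) = fmPsi p m n := by
  by_cases h : 1 ≤ m ∧ 1 ≤ n ∧ n ≤ (p : ℤ)
  · exact mkOp_psi _ _ (fun _ _ => fmPsi_top hp) h.1 h.2.1 h.2.2
  · rw [psi_eq_zero hp h, map_zero]
    by_cases htop : 1 ≤ m ∧ n = p + 1
    · obtain ⟨hm, rfl⟩ := htop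
      rw [fmPsi, add_sub_cancel_right, psi_top hm, smul_smul]
      have hp0 : (p : ℂ) ≠ 0 := Nat.cast_ne_zero.2 (by omega)
      match_scalars
      field_simp
      ring
    · rw [fmPsi, phi_eq_zero (by omega), psi_eq_zero hp (by omega), smul_zero, add_zero]

lemma opComm_opFp_opFm_phi (hn : 0 ≤ n) :
    opComm (opFp p) (opFm p) (phi p m n) = (2 * (n : ℂ) - p) • phi p m n := by
  rw [opComm, LinearMap.sub_apply, Module.End.mul_apply, Module.End.mul_apply, opFm_phi, fmPhi,
    LinearMap.map_smul_of_ne_zero _ fun hc =>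
      opFp_phi fun h => hc (by simp [show n = 0 by omega]),
    opFp_phi (by omega), fpPhi, fpPhi, opFm_phi, fmPhi, sub_add_cancel, add_sub_cancel_right]
  match_scalars
  ring

lemma opComm_opFp_opFm_psi (hp : 1 ≤ p) (hm : 1 ≤ m) (hn : 1 ≤ n) :
    opComm (opFp p) (opFm p) (psi p m n) = (2 * (n : ℂ) - p) • psi p m n := by
  rw [opComm, LinearMap.sub_apply, Module.End.mul_apply, Module.End.mul_apply,
    opFm_psi hp (by omega), fmPsi, map_add, opFp_phi (by omega),
    LinearMap.map_smul_of_ne_zero _ fun hc =>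
      opFp_psi hp fun h => hc (by simp [show n = 1 by omega]),
    opFp_psi hp (by omega), fpPhi, fpPsi, fpPsi, opFm_psi hp (by omega), fmPsi, sub_add_cancel,
    add_sub_cancel_right]
  push_cast
  match_scalars <;> ring

lemma opAComm_opBp_opBm_phi (hp : 1 ≤ p) (hm : 0 ≤ m) :
    opAComm (opBp p) (opBm p) (phi p m n) = (2 * (m : ℂ) + p) • phi p m n := by
  rw [opAComm, LinearMap.add_apply, Module.End.mul_apply, Module.End.mul_apply, opBm_phi hp,
    opBp_phi hp (by omega), bpPhi, map_sub, map_smul, opBm_phi hp,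
    LinearMap.map_smul_of_ne_zero _ fun hc => opBm_psi hp fun h => hc (by simp [h])]
  rcases Int.even_or_odd m with hev | hodd
  · have hm1 : m - 1 ≠ 0 := by obtain ⟨k, rfl⟩ := hev; omega
    rw [bmPhi, if_pos hev, bmPhi, if_neg (Int.not_even_iff_odd.2 hev.add_one), bmPsi,
      if_neg (Int.not_even_iff_odd.2 hev.add_one), map_sub,
      LinearMap.map_smul_of_ne_zero _ fun hc =>
        opBp_phi hp fun h => hc (by simp [show m = 0 by omega]),
      map_smul, opBp_psi hp hm1, bpPhi, bpPsi]
    simp only [sub_add_cancel, add_sub_cancel_right, neg_one_zpow_eq_ite]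
    split_ifs <;> match_scalars <;> ring
  · have hm1 : m - 1 ≠ -1 := by obtain ⟨k, rfl⟩ := hodd; omega
    rw [bmPhi, if_neg (Int.not_even_iff_odd.2 hodd), bmPhi, if_pos hodd.add_one, bmPsi,
      if_pos hodd.add_one, map_sub, map_smul, opBp_phi hp hm1,
      LinearMap.map_smul_of_ne_zero _ fun hc =>
        opBp_psi hp fun h => hc (by simp [show m = 1 by omega]),
      bpPhi, bpPsi]
    simp only [sub_add_cancel, add_sub_cancel_right, neg_one_zpow_eq_ite]
    split_ifs <;> match_scalars <;> ring

lemma opAComm_opBp_opBm_psi (hp : 1 ≤ p) (hm : 1 ≤ m) (hn : 1 ≤ n) :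
    opAComm (opBp p) (opBm p) (psi p m n) = (2 * (m : ℂ) + p) • psi p m n := by
  rw [opAComm, LinearMap.add_apply, Module.End.mul_apply, Module.End.mul_apply,
    opBm_psi hp (by omega), opBp_psi hp (by omega), bpPsi, map_smul, opBm_psi hp (by omega)]
  rcases Int.even_or_odd m with hev | hodd
  · have hm1 : m - 1 ≠ 0 := by obtain ⟨k, rfl⟩ := hev; omega
    rw [bmPsi, if_pos hev, bmPsi, if_neg (Int.not_even_iff_odd.2 hev.add_one), map_add, map_smul,
      map_smul, opBp_phi hp (by omega), opBp_psi hp hm1, bpPhi, bpPsi]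
    simp only [sub_add_cancel, add_sub_cancel_right, neg_one_zpow_eq_ite]
    split_ifs <;> match_scalars <;> ring
  · rw [bmPsi, if_neg (Int.not_even_iff_odd.2 hodd), bmPsi, if_pos hodd.add_one, map_sub,
      map_smul, opBp_phi hp (by omega),
      LinearMap.map_smul_of_ne_zero _ fun hc =>
        opBp_psi hp fun h => hc (by simp [show m = 1 by omega]),
      bpPhi, bpPsi]
    simp only [sub_add_cancel, add_sub_cancel_right, neg_one_zpow_eq_ite]
    split_ifs <;> match_scalars <;> ring

lemma opNb_apply (v : FockV p) :
    opNb p v = (1 / 2 : ℂ) • opAComm (opBp p) (opBm p) v - ((p : ℂ) / 2) • v :=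
  rfl

lemma opNf_apply (v : FockV p) :
    opNf p v = (1 / 2 : ℂ) • opComm (opFp p) (opFm p) v + ((p : ℂ) / 2) • v :=
  rfl

end

/-- Every basis vector is a simultaneous eigenvector of `N_b` and `N_f`,
with eigenvalues `m` and `n` respectively. -/
theorem Nb_Nf_eigenvectors (p : ℕ) (hp : 1 ≤ p) :
    (∀ m n : ℤ, 0 ≤ m → 0 ≤ n → n ≤ (p : ℤ) →
      opNb p (phi p m n) = (m : ℂ) • phi p m n ∧
      opNf p (phi p m n) = (n : ℂ) • phi p m n) ∧
    (∀ m n : ℤ, 1 ≤ m → 1 ≤ n → n ≤ (p : ℤ) →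
      opNb p (psi p m n) = (m : ℂ) • psi p m n ∧
      opNf p (psi p m n) = (n : ℂ) • psi p m n) := by
  refine ⟨fun m n hm hn _ => ⟨?_, ?_⟩, fun m n hm hn _ => ⟨?_, ?_⟩⟩
  · rw [opNb_apply, opAComm_opBp_opBm_phi hp hm]; match_scalars; ring
  · rw [opNf_apply, opComm_opFp_opFm_phi hn]; match_scalars; ring
  · rw [opNb_apply, opAComm_opBp_opBm_psi hp hm hn]; match_scalars; ring
  · rw [opNf_apply, opComm_opFp_opFm_psi hp hm hn]; match_scalars; ring
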